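/- arXiv:2406.03696 — 2 statements merged into one kernel-verified Lean document; each statement's English description precedes it below -/
import Mathlib

section
/- Assume Range(X̃ᵀ) ⊆ Range(X̃ᵀX). Then for all k ≥ 0 the mean iterate of mini-batch gradient descent with random reshuffling satisfies β̄_k − β* = (I − BαZ)^k(β_0 − β*) + (1/n)[I − (I − BαZ)^k]Z†X̃ᵀη, and the first term decomposes as (I − BαZ)^k(β_0 − β*) = P_{Z,0}(β_0 − β*) + (I − BαZ)^k P_Z(β_0 − β*). -/
open Matrix Finset

noncomputable section

namespace MiniBatchGD

variable {p B m : ℕ}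

/-- The product `∏_{j < τ⁻¹(b)} (I - α W_{τ(j)})`, with factors ordered by decreasing
position `j` (the factor with largest `j` leftmost); the empty product is `I`. -/
def prodBefore (α : ℝ) (W : Fin B → Matrix (Fin p) (Fin p) ℝ)
    (τ : Equiv.Perm (Fin B)) (b : Fin B) : Matrix (Fin p) (Fin p) ℝ :=
  ((((List.finRange B).filter (fun j => j < τ.symm b)).reverse).map
      (fun j => (1 : Matrix (Fin p) (Fin p) ℝ) - α • W (τ j))).prod

/-- The product `∏_{j > τ⁻¹(b)} (I - α W_{τ(j)})`, with factors ordered by decreasing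
position `j`; the empty product is `I`. -/
def prodAfter (α : ℝ) (W : Fin B → Matrix (Fin p) (Fin p) ℝ)
    (τ : Equiv.Perm (Fin B)) (b : Fin B) : Matrix (Fin p) (Fin p) ℝ :=
  ((((List.finRange B).filter (fun j => τ.symm b < j)).reverse).map
      (fun j => (1 : Matrix (Fin p) (Fin p) ℝ) - α • W (τ j))).prod

/-- The whole-epoch product `∏_{b=1}^{B} (I - α W_{τ(b)})`, factors ordered by
decreasing position. -/
def prodAll (α : ℝ) (W : Fin B → Matrix (Fin p) (Fin p) ℝ)
    (τ : Equiv.Perm (Fin B)) : Matrix (Fin p) (Fin p) ℝ :=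
  (((List.finRange B).reverse).map
      (fun j => (1 : Matrix (Fin p) (Fin p) ℝ) - α • W (τ j))).prod

/-- `Π_b := (1/B!) ∑_{τ ∈ S_B} ∏_{j < τ⁻¹(b)} (I - α W_{τ(j)})`. -/
def Pib (α : ℝ) (W : Fin B → Matrix (Fin p) (Fin p) ℝ) (b : Fin B) :
    Matrix (Fin p) (Fin p) ℝ :=
  ((B.factorial : ℝ))⁻¹ • ∑ τ : Equiv.Perm (Fin B), prodBefore α W τ b

/-- The `b`-th mini-batch of rows of `X`. -/
def batch (X : Matrix (Fin B × Fin m) (Fin p) ℝ) (b : Fin B) : Matrix (Fin m) (Fin p) ℝ :=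
  Matrix.of fun i j => X (b, i) j

/-- The sample covariance `W_b = (B/n) X_bᵀ X_b` of the `b`-th mini-batch (`n = B m`). -/
def Wb (X : Matrix (Fin B × Fin m) (Fin p) ℝ) (b : Fin B) : Matrix (Fin p) (Fin p) ℝ :=
  ((B : ℝ) / ((B * m : ℕ) : ℝ)) • ((batch X b)ᵀ * batch X b)

/-- The modified feature matrix `X̃`, whose `b`-th block of rows is `X̃_b = X_b Π_b`. -/
def Xtilde (α : ℝ) (X : Matrix (Fin B × Fin m) (Fin p) ℝ) :
    Matrix (Fin B × Fin m) (Fin p) ℝ :=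
  Matrix.of fun bi j => (batch X bi.1 * Pib α (Wb X) bi.1) bi.2 j

/-- The sample cross-covariance matrix `Z = (1/n) X̃ᵀ X`. -/
def Zmat (α : ℝ) (X : Matrix (Fin B × Fin m) (Fin p) ℝ) : Matrix (Fin p) (Fin p) ℝ :=
  (((B * m : ℕ) : ℝ))⁻¹ • ((Xtilde α X)ᵀ * X)

/-- One mini-batch gradient step with step size `α` on batch `b`:
`β ← β - (Bα/n) X_bᵀ (X_b β - y_b)`. -/
def step (α : ℝ) (X : Matrix (Fin B × Fin m) (Fin p) ℝ) (y : Fin B × Fin m → ℝ)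
    (b : Fin B) (β : Fin p → ℝ) : Fin p → ℝ :=
  β - ((B : ℝ) * α / ((B * m : ℕ) : ℝ)) •
    ((batch X b)ᵀ *ᵥ (batch X b *ᵥ β - fun i => y (b, i)))

/-- One epoch of mini-batch gradient descent using the mini-batches in the order
given by the permutation `τ`. -/
def epoch (α : ℝ) (X : Matrix (Fin B × Fin m) (Fin p) ℝ) (y : Fin B × Fin m → ℝ)
    (τ : Equiv.Perm (Fin B)) (β : Fin p → ℝ) : Fin p → ℝ :=
  (List.finRange B).foldl (fun β j => step α X y (τ j) β) β

/-- The mean iterate `β̄_k` of mini-batch gradient descent with random reshuffling: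
since each epoch map is affine in `β` and the permutations of distinct epochs are
independent and uniform, the mean iterate satisfies
`β̄_k = (1/B!) ∑_{τ ∈ S_B} epoch_τ (β̄_{k-1})`. -/
def meanIter (α : ℝ) (X : Matrix (Fin B × Fin m) (Fin p) ℝ) (y : Fin B × Fin m → ℝ)
    (β₀ : Fin p → ℝ) : ℕ → Fin p → ℝ
  | 0 => β₀
  | k + 1 => ((B.factorial : ℝ))⁻¹ •
      ∑ τ : Equiv.Perm (Fin B), epoch α X y τ (meanIter α X y β₀ k)

/-- `Ad` is the Moore–Penrose pseudoinverse of `A`. -/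
def IsMoorePenrose {n₁ n₂ : Type*} [Fintype n₁] [Fintype n₂]
    (A : Matrix n₁ n₂ ℝ) (Ad : Matrix n₂ n₁ ℝ) : Prop :=
  A * Ad * A = A ∧ Ad * A * Ad = Ad ∧ (A * Ad)ᵀ = A * Ad ∧ (Ad * A)ᵀ = Ad * A

end MiniBatchGD

open MiniBatchGD

/-!
Each step is affine, `β ↦ (I - αW_b)β + c_b`, so the epoch in order `τ` is
`β ↦ P_τ β + ∑_b A_{τ,b} c_b`, where `A_{τ,b}` is the product of the factors applied after
batch `b`; telescoping gives `P_τ = I - ∑_b A_{τ,b} αW_b`. Precomposing `τ` with the reversal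
turns `A_{τ,b}` into the transpose of the product applied before `b` (the `W_b` are symmetric),
so the average of `A_{τ,b}` over `S_B` is `Π_bᵀ` and the mean epoch is
`β ↦ (I - BαZ)β + (Bα/n)X̃ᵀy`. The error `e_k = β̄_k - β*` thus satisfies
`e_{k+1} = (I - BαZ)e_k + (Bα/n)X̃ᵀη`. The range hypothesis gives `X̃ᵀη/n = Zv`, hence
`(Bα/n)X̃ᵀη = BαZ·Z†X̃ᵀη/n`, and the recursion is solved around the fixed point `Z†X̃ᵀη/n`.
Finally `Z P_{Z,0} = 0`, so `(I - BαZ)^k` fixes the null-space component.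
-/

namespace MiniBatchGD

section SuffixProduct

variable {S : Type*} {N : ℕ}

def suffixProd [Monoid S] (A : Fin N → S) (j : Fin N) : S :=
  ((((List.finRange N).filter (fun i => j < i)).reverse).map A).prod

lemma filter_finRange_succ_lt_succ (j : Fin N) :
    (List.finRange (N + 1)).filter (fun i => j.succ < i) =
      ((List.finRange N).filter (fun i => j < i)).map Fin.succ := by
  simp [List.finRange_succ, List.filter_map, Function.comp_def, Fin.succ_lt_succ_iff]

lemma filter_finRange_zero_lt :
    (List.finRange (N + 1)).filter (fun i => 0 < i) = (List.finRange N).map Fin.succ := by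
  simp [List.finRange_succ, List.filter_map, Function.comp_def, Fin.succ_pos]

variable [Monoid S]

lemma suffixProd_succ (A : Fin (N + 1) → S) (j : Fin N) :
    suffixProd A j.succ = suffixProd (fun i => A i.succ) j := by
  simp [suffixProd, filter_finRange_succ_lt_succ, ← List.map_reverse, Function.comp_def]

lemma suffixProd_zero (A : Fin (N + 1) → S) :
    suffixProd A 0 = ((List.finRange N).reverse.map fun i => A i.succ).prod := by
  simp [suffixProd, filter_finRange_zero_lt, ← List.map_reverse, Function.comp_def]

lemma prod_map_reverse_finRange_succ (A : Fin (N + 1) → S) :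
    ((List.finRange (N + 1)).reverse.map A).prod =
      ((List.finRange N).reverse.map fun i => A i.succ).prod * A 0 := by
  simp [List.finRange_succ, ← List.map_reverse, Function.comp_def]

end SuffixProduct

theorem prod_one_sub_eq_one_sub_sum {S : Type*} [Ring S] :
    ∀ {N : ℕ} (f : Fin N → S),
      ((List.finRange N).reverse.map fun i => 1 - f i).prod =
        1 - ∑ j, suffixProd (fun i => 1 - f i) j * f j
  | 0, f => by simp
  | N + 1, f => by
    rw [prod_map_reverse_finRange_succ, prod_one_sub_eq_one_sub_sum, Fin.sum_univ_succ,
      suffixProd_zero, prod_one_sub_eq_one_sub_sum]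
    simp only [suffixProd_succ]
    noncomm_ring

theorem foldl_mulVec_add_eq {R n : Type*} [Semiring R] [Fintype n] [DecidableEq n] :
    ∀ {N : ℕ} (A : Fin N → Matrix n n R) (v : Fin N → n → R) (β : n → R),
      (List.finRange N).foldl (fun β j => A j *ᵥ β + v j) β =
        ((List.finRange N).reverse.map A).prod *ᵥ β + ∑ j, suffixProd A j *ᵥ v j
  | 0, A, v, β => by simp
  | N + 1, A, v, β => by
    rw [List.finRange_succ, List.foldl_cons, List.foldl_map, foldl_mulVec_add_eq,
      ← List.finRange_succ, prod_map_reverse_finRange_succ, Fin.sum_univ_succ, suffixProd_zero]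
    simp only [suffixProd_succ, Matrix.mulVec_add, Matrix.mulVec_mulVec]
    abel

end MiniBatchGD

namespace Matrix

variable {R n : Type*} [Ring R] [Fintype n] [DecidableEq n]

theorem eq_pow_mulVec_add_of_recurrence {M : Matrix n n R} {u : n → R} {e : ℕ → n → R}
    (he : ∀ k, e (k + 1) = M *ᵥ e k + (1 - M) *ᵥ u) (k : ℕ) :
    e k = M ^ k *ᵥ e 0 + (1 - M ^ k) *ᵥ u := by
  induction k with
  | zero => simp
  | succ k ih =>
    rw [he, ih, mulVec_add, mulVec_mulVec, mulVec_mulVec, ← pow_succ', add_assoc, ← add_mulVec,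
      mul_sub, mul_one, ← pow_succ']
    abel_nf

theorem pow_one_sub_smul_mul_of_mul_eq_zero {Z P : Matrix n n R} (c : R) (h : Z * P = 0)
    (k : ℕ) : (1 - c • Z) ^ k * P = P := by
  induction k with
  | zero => rw [pow_zero, one_mul]
  | succ k ih => rw [pow_succ, Matrix.mul_assoc, sub_mul, one_mul, smul_mul_assoc, h, smul_zero,
      sub_zero, ih]

theorem pow_mulVec_eq_add_of_mul_mul_eq {Z Zd : Matrix n n R} (hZ : Z * Zd * Z = Z) (c : R)
    (k : ℕ) (v : n → R) :
    (1 - c • Z) ^ k *ᵥ v = (1 - Zd * Z) *ᵥ v + (1 - c • Z) ^ k *ᵥ ((Zd * Z) *ᵥ v) := by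
  have hker : Z * (1 - Zd * Z) = 0 := by rw [mul_sub, mul_one, ← Matrix.mul_assoc, hZ, sub_self]
  rw [mulVec_mulVec, ← pow_one_sub_smul_mul_of_mul_eq_zero c hker k, ← add_mulVec, ← mul_add,
    sub_add_cancel, mul_one]

end Matrix

namespace MiniBatchGD

section Model

variable {p B m : ℕ}

lemma prodAfter_apply_self (α : ℝ) (W : Fin B → Matrix (Fin p) (Fin p) ℝ)
    (τ : Equiv.Perm (Fin B)) (j : Fin B) :
    prodAfter α W τ (τ j) = suffixProd (fun i => 1 - α • W (τ i)) j := by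
  simp only [prodAfter, suffixProd, Equiv.symm_apply_apply]

lemma prodAll_eq_one_sub_sum (α : ℝ) (W : Fin B → Matrix (Fin p) (Fin p) ℝ)
    (τ : Equiv.Perm (Fin B)) :
    prodAll α W τ = 1 - ∑ b, prodAfter α W τ b * (α • W b) := by
  rw [prodAll, prod_one_sub_eq_one_sub_sum fun i => α • W (τ i)]
  exact congrArg _ (Fintype.sum_equiv τ _ _ fun j => by rw [prodAfter_apply_self])

lemma step_eq (α : ℝ) (X : Matrix (Fin B × Fin m) (Fin p) ℝ) (y : Fin B × Fin m → ℝ)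
    (b : Fin B) (β : Fin p → ℝ) :
    step α X y b β = (1 - α • Wb X b) *ᵥ β +
      ((B : ℝ) * α / ((B * m : ℕ) : ℝ)) • ((batch X b)ᵀ *ᵥ fun i => y (b, i)) := by
  rw [step, Wb, smul_smul, sub_mulVec, one_mulVec, smul_mulVec, ← mulVec_mulVec, mulVec_sub,
    smul_sub, mul_div_assoc', mul_comm α]
  abel

lemma epoch_eq (α : ℝ) (X : Matrix (Fin B × Fin m) (Fin p) ℝ) (y : Fin B × Fin m → ℝ)
    (τ : Equiv.Perm (Fin B)) (β : Fin p → ℝ) :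
    epoch α X y τ β = prodAll α (Wb X) τ *ᵥ β + ∑ b, prodAfter α (Wb X) τ b *ᵥ
      (((B : ℝ) * α / ((B * m : ℕ) : ℝ)) • ((batch X b)ᵀ *ᵥ fun i => y (b, i))) := by
  rw [epoch]
  simp only [step_eq]
  rw [foldl_mulVec_add_eq, prodAll]
  exact congrArg _ (Fintype.sum_equiv τ _ _ fun j => by rw [prodAfter_apply_self])

lemma Wb_transpose (X : Matrix (Fin B × Fin m) (Fin p) ℝ) (b : Fin B) :
    (Wb X b)ᵀ = Wb X b := by
  rw [Wb, transpose_smul, transpose_mul, transpose_transpose]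

lemma prodAfter_mul_revPerm (α : ℝ) (W : Fin B → Matrix (Fin p) (Fin p) ℝ)
    (hW : ∀ b, (W b)ᵀ = W b) (τ : Equiv.Perm (Fin B)) (b : Fin B) :
    prodAfter α W (τ * Fin.revPerm) b = (prodBefore α W τ b)ᵀ := by
  have hpos : (τ * Fin.revPerm).symm b = (τ.symm b).rev := by
    rw [Equiv.Perm.mul_def, Equiv.symm_trans_apply, Fin.revPerm_symm, Fin.revPerm_apply]
  have hlist : ((List.finRange B).filter fun j => (τ.symm b).rev < j).reverse =
      ((List.finRange B).filter fun j => j < τ.symm b).map Fin.rev := by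
    rw [← List.filter_reverse, List.finRange_reverse, List.filter_map]
    simp [Function.comp_def, Fin.rev_lt_rev]
  rw [prodAfter, prodBefore, hpos, hlist, transpose_list_prod]
  simp only [← List.map_reverse, List.reverse_reverse, List.map_map]
  refine congrArg List.prod (List.map_congr_left fun j _ => ?_)
  simp only [Function.comp_apply, Equiv.Perm.mul_apply, Fin.revPerm_apply, Fin.rev_rev,
    transpose_sub, transpose_one, transpose_smul, hW]

lemma sum_prodAfter (α : ℝ) (W : Fin B → Matrix (Fin p) (Fin p) ℝ)
    (hW : ∀ b, (W b)ᵀ = W b) (b : Fin B) :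
    ∑ τ, prodAfter α W τ b = (B.factorial : ℝ) • (Pib α W b)ᵀ := by
  rw [Pib, transpose_smul, transpose_sum, smul_smul,
    mul_inv_cancel₀ (by positivity), one_smul, ← Equiv.sum_comp (Equiv.mulRight Fin.revPerm)]
  simp only [Equiv.coe_mulRight, prodAfter_mul_revPerm α W hW]

lemma transpose_mul_eq_sum_batch (Y Y' : Matrix (Fin B × Fin m) (Fin p) ℝ) :
    Yᵀ * Y' = ∑ b, (batch Y b)ᵀ * batch Y' b := by
  ext j j'
  simp only [mul_apply, Fintype.sum_prod_type, Matrix.sum_apply]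
  rfl

lemma transpose_mulVec_eq_sum_batch (Y : Matrix (Fin B × Fin m) (Fin p) ℝ)
    (w : Fin B × Fin m → ℝ) :
    Yᵀ *ᵥ w = ∑ b, (batch Y b)ᵀ *ᵥ fun i => w (b, i) := by
  ext j
  simp only [mulVec, dotProduct, Fintype.sum_prod_type, Finset.sum_apply]
  rfl

lemma batch_Xtilde (α : ℝ) (X : Matrix (Fin B × Fin m) (Fin p) ℝ) (b : Fin B) :
    batch (Xtilde α X) b = batch X b * Pib α (Wb X) b := rfl

lemma smul_Zmat_eq_sum (α : ℝ) (X : Matrix (Fin B × Fin m) (Fin p) ℝ) :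
    ((B : ℝ) * α) • Zmat α X = α • ∑ b, (Pib α (Wb X) b)ᵀ * Wb X b := by
  rw [Zmat, smul_smul, transpose_mul_eq_sum_batch, Finset.smul_sum, Finset.smul_sum]
  refine Finset.sum_congr rfl fun b _ => ?_
  rw [batch_Xtilde, Wb, transpose_mul, mul_smul_comm, Matrix.mul_assoc, smul_smul]
  congr 1
  ring

lemma sum_prodAll (α : ℝ) (X : Matrix (Fin B × Fin m) (Fin p) ℝ) :
    ∑ τ, prodAll α (Wb X) τ = (B.factorial : ℝ) • (1 - ((B : ℝ) * α) • Zmat α X) := by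
  simp only [prodAll_eq_one_sub_sum, Finset.sum_sub_distrib, Finset.sum_const, Finset.card_univ,
    Fintype.card_perm, Fintype.card_fin]
  rw [Finset.sum_comm, smul_Zmat_eq_sum, smul_sub, Finset.smul_sum, Finset.smul_sum,
    ← Nat.cast_smul_eq_nsmul ℝ]
  congr 1
  refine Finset.sum_congr rfl fun b _ => ?_
  rw [← Finset.sum_mul, sum_prodAfter α _ (Wb_transpose X) b, smul_mul_smul_comm, mul_smul]

lemma Xtilde_transpose_mulVec (α : ℝ) (X : Matrix (Fin B × Fin m) (Fin p) ℝ)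
    (w : Fin B × Fin m → ℝ) :
    (Xtilde α X)ᵀ *ᵥ w = ∑ b, (Pib α (Wb X) b)ᵀ *ᵥ ((batch X b)ᵀ *ᵥ fun i => w (b, i)) := by
  simp only [transpose_mulVec_eq_sum_batch, batch_Xtilde, transpose_mul, mulVec_mulVec]

lemma meanIter_succ (α : ℝ) (X : Matrix (Fin B × Fin m) (Fin p) ℝ) (y : Fin B × Fin m → ℝ)
    (β₀ : Fin p → ℝ) (k : ℕ) :
    meanIter α X y β₀ (k + 1) = (1 - ((B : ℝ) * α) • Zmat α X) *ᵥ meanIter α X y β₀ k +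
      ((B : ℝ) * α / ((B * m : ℕ) : ℝ)) • ((Xtilde α X)ᵀ *ᵥ y) := by
  have hB : (B.factorial : ℝ) ≠ 0 := by positivity
  rw [meanIter]
  simp only [epoch_eq, Finset.sum_add_distrib, ← sum_mulVec, sum_prodAll]
  rw [Finset.sum_comm]
  simp only [← sum_mulVec, sum_prodAfter α _ (Wb_transpose X), smul_mulVec, ← Finset.smul_sum,
    smul_add, smul_smul, inv_mul_cancel₀ hB, one_smul, Xtilde_transpose_mulVec, mulVec_smul]
  rw [mul_left_comm, inv_mul_cancel₀ hB, mul_one]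

lemma meanIter_succ_sub (α : ℝ) (X : Matrix (Fin B × Fin m) (Fin p) ℝ)
    {βstar : Fin p → ℝ} {η y : Fin B × Fin m → ℝ} (hy : y = X *ᵥ βstar + η) (β₀ : Fin p → ℝ)
    (k : ℕ) :
    meanIter α X y β₀ (k + 1) - βstar =
      (1 - ((B : ℝ) * α) • Zmat α X) *ᵥ (meanIter α X y β₀ k - βstar) +
        ((B : ℝ) * α / ((B * m : ℕ) : ℝ)) • ((Xtilde α X)ᵀ *ᵥ η) := by
  have hsignal : ((B : ℝ) * α / ((B * m : ℕ) : ℝ)) • ((Xtilde α X)ᵀ *ᵥ (X *ᵥ βstar)) =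
      ((B : ℝ) * α) • (Zmat α X *ᵥ βstar) := by
    rw [mulVec_mulVec, Zmat, smul_mulVec, smul_smul, div_eq_mul_inv]
  rw [meanIter_succ, hy, mulVec_add, smul_add, hsignal, mulVec_sub, sub_mulVec _ _ βstar,
    one_mulVec, smul_mulVec]
  abel

end Model

end MiniBatchGD

open MiniBatchGD

theorem batch_dynamics_general {p B m : ℕ}
    (α : ℝ) (X : Matrix (Fin B × Fin m) (Fin p) ℝ)
    (βstar β₀ : Fin p → ℝ) (η : Fin B × Fin m → ℝ)
    (y : Fin B × Fin m → ℝ) (hy : y = X *ᵥ βstar + η)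
    (Zd : Matrix (Fin p) (Fin p) ℝ) (hZd : IsMoorePenrose (Zmat α X) Zd)
    (hrange : LinearMap.range ((Xtilde α X)ᵀ).mulVecLin ≤
      LinearMap.range ((Xtilde α X)ᵀ * X).mulVecLin) :
    ∀ k : ℕ,
      meanIter α X y β₀ k - βstar =
        ((1 - ((B : ℝ) * α) • Zmat α X) ^ k) *ᵥ (β₀ - βstar) +
          (((B * m : ℕ) : ℝ))⁻¹ •
            (((1 - (1 - ((B : ℝ) * α) • Zmat α X) ^ k) * Zd) *ᵥ ((Xtilde α X)ᵀ *ᵥ η)) ∧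
      ((1 - ((B : ℝ) * α) • Zmat α X) ^ k) *ᵥ (β₀ - βstar) =
        (1 - Zd * Zmat α X) *ᵥ (β₀ - βstar) +
          ((1 - ((B : ℝ) * α) • Zmat α X) ^ k) *ᵥ ((Zd * Zmat α X) *ᵥ (β₀ - βstar)) := by
  set n : ℝ := ((B * m : ℕ) : ℝ)
  set M := 1 - ((B : ℝ) * α) • Zmat α X with hM
  obtain ⟨v, hv⟩ := hrange ⟨η, rfl⟩
  have hnoise_range : n⁻¹ • ((Xtilde α X)ᵀ *ᵥ η) = Zmat α X *ᵥ v := by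
    rw [← mulVecLin_apply, ← hv, mulVecLin_apply, Zmat, smul_mulVec]
  have hnoise : ((B : ℝ) * α / n) • ((Xtilde α X)ᵀ *ᵥ η) =
      (1 - M) *ᵥ (Zd *ᵥ (n⁻¹ • ((Xtilde α X)ᵀ *ᵥ η))) := by
    rw [div_eq_mul_inv, mul_smul, hnoise_range, hM, sub_sub_cancel, mulVec_mulVec, mulVec_mulVec,
      smul_mul_assoc, smul_mul_assoc, hZd.1, smul_mulVec]
  have herr : ∀ k, meanIter α X y β₀ (k + 1) - βstar =
      M *ᵥ (meanIter α X y β₀ k - βstar) + (1 - M) *ᵥ (Zd *ᵥ (n⁻¹ • ((Xtilde α X)ᵀ *ᵥ η))) :=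
    fun k => by rw [meanIter_succ_sub α X hy, hnoise]
  intro k
  refine ⟨(eq_pow_mulVec_add_of_recurrence (e := fun k => meanIter α X y β₀ k - βstar) herr
    k).trans ?_, pow_mulVec_eq_add_of_mul_mul_eq hZd.1 _ k _⟩
  rw [mulVec_mulVec, mulVec_smul]
  rfl

/-- Theorem `batch_dynamics`. Assume `Range(X̃ᵀ) ⊆ Range(X̃ᵀX)`. Then for all
`k ≥ 0` the mean iterate of mini-batch gradient descent with random reshuffling satisfies
`β̄_k − β* = (I − BαZ)^k (β₀ − β*) + (1/n)[I − (I − BαZ)^k] Z† X̃ᵀ η`, and the first term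
decomposes as `(I − BαZ)^k (β₀ − β*) = P_{Z,0}(β₀ − β*) + (I − BαZ)^k P_Z (β₀ − β*)`. -/
theorem batch_dynamics {p B m : ℕ} (hB : 1 ≤ B) (hm : 1 ≤ m) (hp : 1 ≤ p)
    (α : ℝ) (hα : 0 ≤ α) (X : Matrix (Fin B × Fin m) (Fin p) ℝ)
    (βstar β₀ : Fin p → ℝ) (η : Fin B × Fin m → ℝ)
    (y : Fin B × Fin m → ℝ) (hy : y = X *ᵥ βstar + η)
    (Zd : Matrix (Fin p) (Fin p) ℝ) (hZd : IsMoorePenrose (Zmat α X) Zd)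
    (hrange : LinearMap.range ((Xtilde α X)ᵀ).mulVecLin ≤
      LinearMap.range ((Xtilde α X)ᵀ * X).mulVecLin) :
    ∀ k : ℕ,
      meanIter α X y β₀ k - βstar =
        ((1 - ((B : ℝ) * α) • Zmat α X) ^ k) *ᵥ (β₀ - βstar) +
          (((B * m : ℕ) : ℝ))⁻¹ •
            (((1 - (1 - ((B : ℝ) * α) • Zmat α X) ^ k) * Zd) *ᵥ ((Xtilde α X)ᵀ *ᵥ η)) ∧
      ((1 - ((B : ℝ) * α) • Zmat α X) ^ k) *ᵥ (β₀ - βstar) =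
        (1 - Zd * Zmat α X) *ᵥ (β₀ - βstar) +
          ((1 - ((B : ℝ) * α) • Zmat α X) ^ k) *ᵥ ((Zd * Zmat α X) *ᵥ (β₀ - βstar)) :=
  batch_dynamics_general α X βstar β₀ η y hy Zd hZd hrange
end
end

section
/- (Mini-batching with replacement.) Suppose in each iteration a mini-batch index b is sampled independently and uniformly from {1,…,B} and the update β ← β − (Bα/n)X_bᵀ(X_bβ − y_b) is applied, starting from β_0 ∈ ℝ^p. Let β̂_k denote the mean iterate after k epochs (i.e. Bk iterations), averaged over the i.i.d. sampling of the mini-batches. Then for all k ≥ 0, β̂_k − β* = (I − αW)^{Bk}(β_0 − β*) + (1/n)[I − (I − αW)^{Bk}]W†Xᵀη; i.e. sampling with replacement matches the full-batch error dynamics up to a time change by the factor B. -/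
/-!
Averaging the `B` mini-batch updates gives exactly the full-batch gradient step with step
size `α`, so the mean iterate follows full-batch gradient descent and its error obeys the
affine recursion `e ↦ (I - αW) e + (α/n) Xᵀη`. Unrolling it for `N` steps gives
`(I - αW)^N e₀ + ∑_{j<N} (I - αW)^j (α/n) Xᵀη`. Since `(∑_{j<N} (I - αW)^j) αW =
I - (I - αW)^N` and `W W†` fixes the range of `Xᵀ` (it fixes that of `XᵀX`), the geometric sum
equals `(1/n)[I - (I - αW)^N] W† Xᵀη`.
-/

open Matrix Finset

noncomputable section

open MiniBatchGD

namespace Matrix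

variable {ι κ R : Type*} [Fintype ι] [Fintype κ] [DecidableEq κ]

theorem mul_conjTranspose_eq_of_mul_gram_eq [PartialOrder R] [Ring R] [StarRing R]
    [StarOrderedRing R] [NoZeroDivisors R] {A : Matrix ι κ R} {P : Matrix κ κ R}
    (h : P * (Aᴴ * A) = Aᴴ * A) : P * Aᴴ = Aᴴ := by
  have hQ : (1 - P) * (Aᴴ * A) = 0 := by rw [Matrix.sub_mul, h, Matrix.one_mul, sub_self]
  rw [mul_conjTranspose_mul_self_eq_zero, Matrix.sub_mul, Matrix.one_mul, sub_eq_zero] at hQ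
  exact hQ.symm

theorem iterate_sub_eq_of_affine [Ring R] {f : (κ → R) → κ → R} {A : Matrix κ κ R}
    {x₀ v : κ → R} (hf : ∀ x, f x - x₀ = A *ᵥ (x - x₀) + v) (x : κ → R) (N : ℕ) :
    f^[N] x - x₀ = A ^ N *ᵥ (x - x₀) + (∑ j ∈ range N, A ^ j) *ᵥ v := by
  induction N with
  | zero => simp
  | succ N ih =>
    rw [Function.iterate_succ_apply', hf, ih, geom_sum_succ, pow_succ', mulVec_add,
      mulVec_mulVec, mulVec_mulVec, add_mulVec, one_mulVec, add_assoc]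

theorem geom_sum_one_sub_smul_mulVec [Ring R] {W Wd : Matrix κ κ R} {g : κ → R}
    (hg : (W * Wd) *ᵥ g = g) (α : R) (N : ℕ) :
    ((1 - (1 - α • W) ^ N) * Wd) *ᵥ g = (∑ j ∈ range N, (1 - α • W) ^ j) *ᵥ (α • g) := by
  rw [← geom_sum_mul_neg, sub_sub_cancel, Matrix.mul_assoc, ← mulVec_mulVec, Matrix.smul_mul,
    smul_mulVec, hg]

end Matrix

namespace MiniBatchGD

variable {p B m : ℕ}

/-- Full-batch gradient descent on `‖Xβ - y‖² / (2n)` with step size `α`. -/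
def gdStep {ι : Type*} [Fintype ι] (α n : ℝ) (X : Matrix ι (Fin p) ℝ) (y : ι → ℝ)
    (β : Fin p → ℝ) : Fin p → ℝ :=
  β - (α / n) • (Xᵀ *ᵥ (X *ᵥ β - y))

theorem sum_batch_transpose_mulVec (X : Matrix (Fin B × Fin m) (Fin p) ℝ)
    (v : Fin B × Fin m → ℝ) : ∑ b, (batch X b)ᵀ *ᵥ (fun i => v (b, i)) = Xᵀ *ᵥ v := by
  ext j
  simp only [Finset.sum_apply, mulVec, dotProduct, transpose_apply, batch, of_apply,
    Fintype.sum_prod_type]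

theorem batch_mulVec (X : Matrix (Fin B × Fin m) (Fin p) ℝ) (b : Fin B) (β : Fin p → ℝ) :
    batch X b *ᵥ β = fun i => (X *ᵥ β) (b, i) :=
  rfl

theorem average_step_eq_gdStep (hB : B ≠ 0) (α : ℝ) (X : Matrix (Fin B × Fin m) (Fin p) ℝ)
    (y : Fin B × Fin m → ℝ) (β : Fin p → ℝ) :
    (B : ℝ)⁻¹ • ∑ b, step α X y b β = gdStep α ((B * m : ℕ) : ℝ) X y β := by
  have hB' : (B : ℝ) ≠ 0 := Nat.cast_ne_zero.mpr hB
  have hgrad : ∑ b, (batch X b)ᵀ *ᵥ (batch X b *ᵥ β - fun i => y (b, i)) =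
      Xᵀ *ᵥ (X *ᵥ β - y) := by
    simp only [batch_mulVec, ← sum_batch_transpose_mulVec X (X *ᵥ β - y)]
    rfl
  simp only [step, gdStep, Finset.sum_sub_distrib, Finset.sum_const, Finset.card_univ,
    Fintype.card_fin, ← Finset.smul_sum, hgrad, smul_sub, smul_smul, ← Nat.cast_smul_eq_nsmul ℝ,
    inv_mul_cancel₀ hB', one_smul]
  congr 2
  field_simp

theorem gdStep_sub {ι : Type*} [Fintype ι] (α n : ℝ) (X : Matrix ι (Fin p) ℝ)
    (βstar : Fin p → ℝ) (η : ι → ℝ) (β : Fin p → ℝ) :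
    gdStep α n X (X *ᵥ βstar + η) β - βstar =
      (1 - α • (n⁻¹ • (Xᵀ * X))) *ᵥ (β - βstar) + (α / n) • (Xᵀ *ᵥ η) := by
  have hres : X *ᵥ β - (X *ᵥ βstar + η) = X *ᵥ (β - βstar) - η := by
    rw [mulVec_sub]; abel
  rw [gdStep, hres, mulVec_sub, mulVec_mulVec, sub_mulVec, one_mulVec, smul_mulVec, smul_mulVec,
    smul_sub, smul_smul, div_eq_mul_inv]
  abel

end MiniBatchGD

open MiniBatchGD

theorem with_replacement_dynamics_general {p B m : ℕ} (hB : 1 ≤ B) (hm : 1 ≤ m)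
    (α : ℝ) (X : Matrix (Fin B × Fin m) (Fin p) ℝ)
    (βstar β₀ : Fin p → ℝ) (η : Fin B × Fin m → ℝ)
    (y : Fin B × Fin m → ℝ) (hy : y = X *ᵥ βstar + η)
    (W : Matrix (Fin p) (Fin p) ℝ) (hW : W = (((B * m : ℕ) : ℝ))⁻¹ • (Xᵀ * X))
    (Wd : Matrix (Fin p) (Fin p) ℝ) (hWd : IsMoorePenrose W Wd) :
    ∀ k : ℕ,
      (fun β => ((B : ℝ))⁻¹ • ∑ b : Fin B, step α X y b β)^[B * k] β₀ - βstar =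
        ((1 - α • W) ^ (B * k)) *ᵥ (β₀ - βstar) +
          (((B * m : ℕ) : ℝ))⁻¹ •
            (((1 - (1 - α • W) ^ (B * k)) * Wd) *ᵥ (Xᵀ *ᵥ η)) := by
  intro k
  set n : ℝ := ((B * m : ℕ) : ℝ)
  have hn : n ≠ 0 := Nat.cast_ne_zero.mpr (Nat.mul_pos hB hm).ne'
  have hgram : Xᵀ * X = n • W := by rw [hW, smul_smul, mul_inv_cancel₀ hn, one_smul]
  have hproj : (W * Wd) *ᵥ (Xᵀ *ᵥ η) = Xᵀ *ᵥ η := by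
    have hfix : (W * Wd) * (Xᵀ * X) = Xᵀ * X := by rw [hgram, Matrix.mul_smul, hWd.1]
    simp only [← conjTranspose_eq_transpose_of_trivial] at hfix ⊢
    rw [mulVec_mulVec, mul_conjTranspose_eq_of_mul_gram_eq hfix]
  have herror : ∀ β, (B : ℝ)⁻¹ • ∑ b, step α X y b β - βstar =
      (1 - α • W) *ᵥ (β - βstar) + (α / n) • (Xᵀ *ᵥ η) := fun β => by
    rw [average_step_eq_gdStep (by omega), hy, gdStep_sub, ← hW]
  rw [iterate_sub_eq_of_affine herror, geom_sum_one_sub_smul_mulVec hproj, mulVec_smul,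
    mulVec_smul, smul_smul, div_eq_inv_mul]

/-- Mini-batching with replacement, Remark `rmk:with_replacement`. If in each
iteration a mini-batch index is sampled independently and uniformly from `{1,…,B}` and the
update `β ← β − (Bα/n)X_bᵀ(X_bβ − y_b)` is applied, then the mean iterate `β̂_k` after `k`
epochs (i.e. `Bk` iterations) — which, by independence and affineness of the updates, is
obtained by iterating the averaged update map `β ↦ (1/B)∑_b (β − (Bα/n)X_bᵀ(X_bβ − y_b))`
for `Bk` steps — satisfies
`β̂_k − β* = (I − αW)^{Bk}(β₀ − β*) + (1/n)[I − (I − αW)^{Bk}]W†Xᵀη`;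
i.e. sampling with replacement matches the full-batch error dynamics up to a time change by
the factor `B`. -/
theorem with_replacement_dynamics {p B m : ℕ} (hB : 1 ≤ B) (hm : 1 ≤ m) (hp : 1 ≤ p)
    (α : ℝ) (hα : 0 ≤ α) (X : Matrix (Fin B × Fin m) (Fin p) ℝ)
    (βstar β₀ : Fin p → ℝ) (η : Fin B × Fin m → ℝ)
    (y : Fin B × Fin m → ℝ) (hy : y = X *ᵥ βstar + η)
    (W : Matrix (Fin p) (Fin p) ℝ) (hW : W = (((B * m : ℕ) : ℝ))⁻¹ • (Xᵀ * X))
    (Wd : Matrix (Fin p) (Fin p) ℝ) (hWd : IsMoorePenrose W Wd) :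
    ∀ k : ℕ,
      (fun β => ((B : ℝ))⁻¹ • ∑ b : Fin B, step α X y b β)^[B * k] β₀ - βstar =
        ((1 - α • W) ^ (B * k)) *ᵥ (β₀ - βstar) +
          (((B * m : ℕ) : ℝ))⁻¹ •
            (((1 - (1 - α • W) ^ (B * k)) * Wd) *ᵥ (Xᵀ *ᵥ η)) :=
  with_replacement_dynamics_general hB hm α X βstar β₀ η y hy W hW Wd hWd
end
end
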